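/- Let α ≥ 3 be an integer, R_c the unique positive solution of (R − 1)·g_α(R) = R^α/(α−1)!, and β_c = R_c/g_α(R_c). Then the function R(β) = Σ_{n≥2} r_α(n)·β^{n−1}, defined for 0 ≤ β < β_c, extends continuously to β = β_c with R(β_c) = R_c, and there exists a constant C > 0 such that lim_{β → β_c⁻} (R_c − R(β)) / √(β_c − β) = C; that is, near the critical point R(β) ≈ R_c − C·(β_c − β)^{1/2} (square-root singularity of the branched-polymer partition function). -/

import Mathlib

open Finset Filter

/-- The truncated exponential `g_α(R) = Σ_{γ=0}^{α−1} R^γ/γ!`. -/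
noncomputable def truncExp (α : ℕ) (R : ℝ) : ℝ :=
  ∑ γ ∈ Finset.range α, R ^ γ / (Nat.factorial γ)

/-- The number `r_α(n)` of combinatorially inequivalent rooted tree graphs with
`n` vertices, root of coordination number 1, and all coordination numbers at
most `α`, given by the paper's closed (Cayley-type) formula. -/
noncomputable def rootedTrees (α n : ℕ) : ℝ :=
  (1 / (n - 1 : ℝ)) *
    ∑ f ∈ (Fintype.piFinset fun _ : Fin (n - 1) => Finset.range α) |>.filter
        (fun f => ∑ i, f i = n - 2),
      ∏ i, (1 : ℝ) / (Nat.factorial (f i))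

/-- The partition function `R(β) = Σ_{n≥2} r_α(n)·β^{n−1}` of rooted branched
polymers at fugacity `β`. -/
noncomputable def polymerPartition (α : ℕ) (β : ℝ) : ℝ :=
  ∑' k : ℕ, rootedTrees α (k + 2) * β ^ (k + 1)

open PowerSeries Polynomial


noncomputable def gpoly (α : ℕ) : Polynomial ℝ :=
  ∑ γ ∈ Finset.range α, Polynomial.C ((Nat.factorial γ : ℝ)⁻¹) * Polynomial.X ^ γ

noncomputable def acoef (α : ℕ) : ℕ → ℝ
  | 0 => 0
  | n + 1 => PowerSeries.coeff (R := ℝ) n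
      (Polynomial.aeval (PowerSeries.mk fun k => if h : k ≤ n then acoef α k else 0) (gpoly α))
  termination_by n => n
  decreasing_by exact Nat.lt_succ_of_le h

lemma coeff_pow_congr (F G : PowerSeries ℝ) (m γ : ℕ)
    (h : ∀ i ≤ m, PowerSeries.coeff (R := ℝ) i F = PowerSeries.coeff (R := ℝ) i G) :
    PowerSeries.coeff (R := ℝ) m (F ^ γ) = PowerSeries.coeff (R := ℝ) m (G ^ γ) := by
  induction γ generalizing m with
  | zero => simp
  | succ γ ih =>
    rw [pow_succ, pow_succ, PowerSeries.coeff_mul, PowerSeries.coeff_mul]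
    refine Finset.sum_congr rfl fun p hp => ?_
    rw [Finset.HasAntidiagonal.mem_antidiagonal] at hp
    rw [ih p.1 (fun i hi => h i (hi.trans (by omega))), h p.2 (by omega)]

lemma coeff_aeval_congr (F G : PowerSeries ℝ) (m : ℕ)
    (h : ∀ i ≤ m, PowerSeries.coeff (R := ℝ) i F = PowerSeries.coeff (R := ℝ) i G) (p : Polynomial ℝ) :
    PowerSeries.coeff (R := ℝ) m (Polynomial.aeval F p) = PowerSeries.coeff (R := ℝ) m (Polynomial.aeval G p) := by
  rw [Polynomial.aeval_eq_sum_range (p := p) F, Polynomial.aeval_eq_sum_range (p := p) G,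
    map_sum, map_sum]
  refine Finset.sum_congr rfl fun γ _ => ?_
  rw [LinearMap.map_smul, LinearMap.map_smul, coeff_pow_congr F G m γ h]

lemma acoef_functional_eq (α : ℕ) :
    PowerSeries.mk (acoef α) =
      PowerSeries.X * Polynomial.aeval (PowerSeries.mk (acoef α)) (gpoly α) := by
  ext n
  cases n with
  | zero => simp [acoef]
  | succ n =>
    rw [PowerSeries.coeff_succ_X_mul, PowerSeries.coeff_mk]
    show acoef α (n+1) = _
    rw [acoef]
    exact coeff_aeval_congr _ _ n (fun i hi => by simp [hi]) _

lemma constantCoeff_acoef (α : ℕ) : PowerSeries.coeff (R := ℝ) 0 (PowerSeries.mk (acoef α)) = 0 := by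
  simp [acoef]

lemma coeff_pow_acoef_eq_zero (α : ℕ) {γ m : ℕ} (h : m < γ) :
    PowerSeries.coeff (R := ℝ) m ((PowerSeries.mk (acoef α)) ^ γ) = 0 := by
  rw [acoef_functional_eq α, mul_pow, PowerSeries.coeff_X_pow_mul', if_neg (by omega)]

lemma coeff_aeval_expand (α : ℕ) (q : Polynomial ℝ) (m : ℕ) :
    PowerSeries.coeff (R := ℝ) m (Polynomial.aeval (PowerSeries.mk (acoef α)) q) =
      ∑ γ ∈ Finset.range (q.natDegree + 1),
        q.coeff γ * PowerSeries.coeff (R := ℝ) m ((PowerSeries.mk (acoef α)) ^ γ) := by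
  rw [Polynomial.aeval_eq_sum_range, map_sum]
  exact Finset.sum_congr rfl fun γ _ => by rw [LinearMap.map_smul, smul_eq_mul]

theorem lagrange_inversion (α : ℕ) : ∀ n : ℕ, 1 ≤ n → ∀ j m, j + m = n → 1 ≤ j →
    (n : ℝ) * PowerSeries.coeff (R := ℝ) n ((PowerSeries.mk (acoef α)) ^ j)
      = j * Polynomial.coeff ((gpoly α) ^ n) m := by
  intro n
  induction n using Nat.strong_induction_on with
  | _ n IH =>
  intro hn j m hjm hj
  have hA : PowerSeries.coeff (R := ℝ) n ((PowerSeries.mk (acoef α)) ^ j) =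
      PowerSeries.coeff (R := ℝ) m (Polynomial.aeval (PowerSeries.mk (acoef α)) ((gpoly α) ^ j)) := by
    have h1 : (Polynomial.aeval (PowerSeries.mk (acoef α))) ((gpoly α) ^ j) =
        ((Polynomial.aeval (PowerSeries.mk (acoef α))) (gpoly α)) ^ j := map_pow _ _ _
    rw [h1]
    conv_lhs => rw [acoef_functional_eq α, mul_pow]
    rw [← hjm, add_comm, PowerSeries.coeff_X_pow_mul]
  rcases Nat.eq_zero_or_pos m with hm0 | hm
  · subst hm0
    have hjn : j = n := by omega
    subst hjn
    rw [hA, coeff_aeval_expand]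
    rw [Finset.sum_eq_single 0]
    · simp
    · intro γ _ hγ
      rw [coeff_pow_acoef_eq_zero α (Nat.pos_of_ne_zero hγ), mul_zero]
    · intro h; exact absurd (Finset.mem_range.mpr (by omega)) h
  · obtain ⟨m', rfl⟩ : ∃ m', m = m' + 1 := ⟨m - 1, by omega⟩
    have hjn : j < n := by omega
    set D := ((gpoly α) ^ j).natDegree + 1 with hD
    have step1 : ((m' + 1 : ℕ) : ℝ) * PowerSeries.coeff (R := ℝ) n ((PowerSeries.mk (acoef α)) ^ j) =
        ∑ γ ∈ Finset.range (m' + 2),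
          ((gpoly α) ^ j).coeff γ * ((γ : ℝ) * ((gpoly α) ^ (m' + 1)).coeff (m' + 1 - γ)) := by
      rw [hA, coeff_aeval_expand, Finset.mul_sum]
      have hext1 : ∑ γ ∈ Finset.range D, ((m' + 1 : ℕ) : ℝ) * (((gpoly α) ^ j).coeff γ *
            PowerSeries.coeff (R := ℝ) (m' + 1) ((PowerSeries.mk (acoef α)) ^ γ)) =
          ∑ γ ∈ Finset.range (max D (m' + 2)), ((m' + 1 : ℕ) : ℝ) * (((gpoly α) ^ j).coeff γ *
            PowerSeries.coeff (R := ℝ) (m' + 1) ((PowerSeries.mk (acoef α)) ^ γ)) := by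
        refine Finset.sum_subset (Finset.range_subset_range.mpr (le_max_left _ _)) ?_
        intro γ _ hγ
        rw [Finset.mem_range, not_lt] at hγ
        rw [Polynomial.coeff_eq_zero_of_natDegree_lt (by omega), zero_mul, mul_zero]
      have hext2 : ∑ γ ∈ Finset.range (m' + 2),
            ((gpoly α) ^ j).coeff γ * ((γ : ℝ) * ((gpoly α) ^ (m' + 1)).coeff (m' + 1 - γ)) =
          ∑ γ ∈ Finset.range (max D (m' + 2)), ((m' + 1 : ℕ) : ℝ) * (((gpoly α) ^ j).coeff γ *
            PowerSeries.coeff (R := ℝ) (m' + 1) ((PowerSeries.mk (acoef α)) ^ γ)) := by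
        refine (Finset.sum_congr rfl fun γ hγ => ?_).trans
          (Finset.sum_subset (Finset.range_subset_range.mpr (le_max_right _ _)) ?_)
        · rw [Finset.mem_range] at hγ
          rcases Nat.eq_zero_or_pos γ with h0 | hγ1
          · subst h0
            rw [pow_zero, PowerSeries.coeff_one, if_neg (by omega : ¬ m' + 1 = 0)]
            push_cast
            ring
          · have hIH := IH (m' + 1) (by omega) (by omega) γ (m' + 1 - γ) (by omega) hγ1
            rw [← hIH]; ring
        · intro γ _ hγ
          rw [Finset.mem_range, not_lt] at hγ
          rw [coeff_pow_acoef_eq_zero α (by omega), mul_zero, mul_zero]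
      rw [hext1, ← hext2]
    have hder : ∑ γ ∈ Finset.range (m' + 2),
          ((gpoly α) ^ j).coeff γ * ((γ : ℝ) * ((gpoly α) ^ (m' + 1)).coeff (m' + 1 - γ)) =
        (Polynomial.derivative ((gpoly α) ^ j) * (gpoly α) ^ (m' + 1)).coeff m' := by
      rw [Polynomial.coeff_mul, Finset.Nat.sum_antidiagonal_eq_sum_range_succ_mk,
        Finset.sum_range_succ' _ (m' + 1)]
      simp only [Polynomial.coeff_derivative, Nat.cast_zero, zero_mul, mul_zero, add_zero,
        Nat.succ_sub_succ_eq_sub, zero_add]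
      refine (Finset.sum_congr rfl fun k hk => ?_)
      push_cast
      ring
    have hpoly : Polynomial.C (n : ℝ) * (Polynomial.derivative ((gpoly α) ^ j) * (gpoly α) ^ (m' + 1)) =
        Polynomial.C ((j : ℕ) : ℝ) * Polynomial.derivative ((gpoly α) ^ n) := by
      rw [Polynomial.derivative_pow, Polynomial.derivative_pow]
      have : (gpoly α) ^ (j - 1) * (gpoly α) ^ (m' + 1) = (gpoly α) ^ (n - 1) := by
        rw [← pow_add]; congr 1; omega
      calc Polynomial.C (n : ℝ) * (Polynomial.C ((j : ℕ) : ℝ) * (gpoly α) ^ (j - 1) *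
              Polynomial.derivative (gpoly α) * (gpoly α) ^ (m' + 1))
          = Polynomial.C ((j : ℕ) : ℝ) * (Polynomial.C (n : ℝ) * ((gpoly α) ^ (j - 1) *
              (gpoly α) ^ (m' + 1)) * Polynomial.derivative (gpoly α)) := by ring
        _ = _ := by rw [this]
    have hcoeff := congrArg (fun p => Polynomial.coeff p m') hpoly
    simp only [Polynomial.coeff_C_mul, Polynomial.coeff_derivative] at hcoeff
    rw [hder] at step1
    have hm1 : ((m' + 1 : ℕ) : ℝ) ≠ 0 := Nat.cast_ne_zero.mpr (Nat.succ_ne_zero _)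
    refine mul_left_cancel₀ hm1 ?_
    push_cast at step1 hcoeff ⊢
    linear_combination (n : ℝ) * step1 + hcoeff

lemma gpoly_eval (α : ℕ) (R : ℝ) : (gpoly α).eval R = truncExp α R := by
  rw [gpoly, Polynomial.eval_finset_sum, truncExp]
  refine Finset.sum_congr rfl fun γ _ => ?_
  rw [Polynomial.eval_mul, Polynomial.eval_C, Polynomial.eval_pow, Polynomial.eval_X,
    div_eq_mul_inv, mul_comm]

lemma gpoly_pow_eq_sum (α m : ℕ) :
    (gpoly α) ^ m = ∑ f ∈ Fintype.piFinset (fun _ : Fin m => Finset.range α),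
      Polynomial.C (∏ i, ((Nat.factorial (f i) : ℝ))⁻¹) * Polynomial.X ^ (∑ i, f i) := by
  have h1 : (gpoly α) ^ m = ∏ _i : Fin m, gpoly α := by
    rw [Finset.prod_const, Finset.card_univ, Fintype.card_fin]
  rw [h1, gpoly, Finset.prod_univ_sum]
  refine Finset.sum_congr rfl fun f _ => ?_
  rw [Finset.prod_mul_distrib, map_prod (Polynomial.C : ℝ →+* ℝ[X]) _ _, Finset.prod_pow_eq_pow_sum]

lemma gpoly_pow_coeff (α m k : ℕ) :
    ((gpoly α) ^ m).coeff k =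
      ∑ f ∈ (Fintype.piFinset fun _ : Fin m => Finset.range α) |>.filter
          (fun f => ∑ i, f i = k),
        ∏ i, (1 : ℝ) / (Nat.factorial (f i)) := by
  rw [gpoly_pow_eq_sum, Polynomial.finset_sum_coeff, Finset.sum_filter]
  refine Finset.sum_congr rfl fun f _ => ?_
  rw [Polynomial.coeff_C_mul, Polynomial.coeff_X_pow]
  simp only [one_div]
  split_ifs with h1 h2 h3
  · rw [mul_one]
  · exact absurd h1.symm h2
  · exact absurd h3.symm h1
  · rw [mul_zero]
lemma gpoly_coeff (α γ : ℕ) :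
    (gpoly α).coeff γ = if γ < α then ((Nat.factorial γ : ℝ))⁻¹ else 0 := by
  rw [gpoly, Polynomial.finset_sum_coeff]
  simp only [Polynomial.coeff_C_mul, Polynomial.coeff_X_pow]
  split_ifs with h
  · rw [Finset.sum_eq_single γ]
    · rw [if_pos rfl, mul_one]
    · intro g _ hg; rw [if_neg (fun hc => hg hc.symm), mul_zero]
    · intro hmem; exact absurd (Finset.mem_range.mpr h) hmem
  · refine Finset.sum_eq_zero fun g hg => ?_
    rw [Finset.mem_range] at hg
    rw [if_neg (by omega), mul_zero]

lemma gpoly_natDegree_lt (α : ℕ) (hα : 1 ≤ α) : (gpoly α).natDegree < α := by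
  have : (gpoly α).natDegree ≤ α - 1 := by
    refine Polynomial.natDegree_sum_le_of_forall_le _ _ fun γ hγ => ?_
    rw [Finset.mem_range] at hγ
    exact (Polynomial.natDegree_C_mul_X_pow_le _ _).trans (by omega)
  omega

lemma derivative_gpoly (α : ℕ) :
    Polynomial.derivative (gpoly α) = gpoly (α - 1) := by
  rcases Nat.eq_zero_or_pos α with h0 | h1
  · subst h0; simp [gpoly]
  obtain ⟨α', rfl⟩ : ∃ α', α = α' + 1 := ⟨α - 1, by omega⟩
  rw [gpoly, map_sum, Finset.sum_range_succ' _ α']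
  have h2 : ∀ k : ℕ, Polynomial.derivative
      (Polynomial.C ((Nat.factorial (k+1) : ℝ))⁻¹ * Polynomial.X ^ (k+1)) =
      Polynomial.C ((Nat.factorial k : ℝ))⁻¹ * Polynomial.X ^ k := by
    intro k
    rw [Polynomial.derivative_C_mul, Polynomial.derivative_X_pow, Nat.add_sub_cancel,
      ← mul_assoc, ← Polynomial.C_mul]
    congr 1
    rw [Nat.factorial_succ]
    push_cast
    rw [mul_inv]
    field_simp
  have h0 : Polynomial.derivative
      (Polynomial.C ((Nat.factorial 0 : ℝ))⁻¹ * Polynomial.X ^ 0) = 0 := by simp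
  simp only [h2, h0, add_zero]
  rfl

lemma truncExp_succ (α : ℕ) (R : ℝ) :
    truncExp (α + 1) R = truncExp α R + R ^ α / (Nat.factorial α : ℝ) :=
  Finset.sum_range_succ _ _

lemma one_le_truncExp (α : ℕ) (hα : 1 ≤ α) {x : ℝ} (hx : 0 ≤ x) : 1 ≤ truncExp α x := by
  rw [truncExp]
  have h := Finset.single_le_sum (f := fun γ => x ^ γ / (Nat.factorial γ : ℝ))
    (fun i _ => by positivity) (Finset.mem_range.mpr (by omega : 0 < α))
  simpa using h

lemma truncExp_pos (α : ℕ) (hα : 1 ≤ α) {x : ℝ} (hx : 0 ≤ x) : 0 < truncExp α x :=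
  lt_of_lt_of_le one_pos (one_le_truncExp α hα hx)

lemma continuous_truncExp (α : ℕ) : Continuous (truncExp α) := by
  have h : truncExp α = fun x => (gpoly α).eval x := funext fun x => (gpoly_eval α x).symm
  rw [h]
  exact (gpoly α).continuous

lemma hasDerivAt_truncExp (α : ℕ) (x : ℝ) :
    HasDerivAt (truncExp α) (truncExp (α - 1) x) x := by
  have h := (gpoly α).hasDerivAt x
  rw [derivative_gpoly, gpoly_eval] at h
  exact h.congr_of_eventuallyEq (Filter.Eventually.of_forall fun y => (gpoly_eval α y).symm)

lemma coeff_mul_pow_le_eval (p : Polynomial ℝ) (hp : ∀ i, 0 ≤ p.coeff i) {x : ℝ}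
    (hx : 0 ≤ x) (k : ℕ) : p.coeff k * x ^ k ≤ p.eval x := by
  rcases le_or_gt k p.natDegree with h | h
  · rw [Polynomial.eval_eq_sum_range]
    exact Finset.single_le_sum (fun i _ => mul_nonneg (hp i) (pow_nonneg hx i))
      (Finset.mem_range.mpr (by omega))
  · rw [Polynomial.coeff_eq_zero_of_natDegree_lt h, zero_mul, Polynomial.eval_eq_sum_range]
    exact Finset.sum_nonneg fun i _ => mul_nonneg (hp i) (pow_nonneg hx i)

lemma gpoly_pow_coeff_nonneg (α m k : ℕ) : 0 ≤ ((gpoly α) ^ m).coeff k := by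
  rw [gpoly_pow_coeff]
  exact Finset.sum_nonneg fun f _ => Finset.prod_nonneg fun i _ => by positivity

lemma acoef_succ_eq (α k : ℕ) :
    acoef α (k + 1) =
      PowerSeries.coeff (R := ℝ) k (Polynomial.aeval (PowerSeries.mk (acoef α)) (gpoly α)) := by
  have := congrArg (fun F => PowerSeries.coeff (R := ℝ) (k + 1) F) (acoef_functional_eq α)
  simpa [PowerSeries.coeff_succ_X_mul] using this

lemma acoef_eq_coeff_div (α k : ℕ) :
    acoef α (k + 1) = ((gpoly α) ^ (k + 1)).coeff k / ((k + 1 : ℕ) : ℝ) := by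
  have hLI := lagrange_inversion α (k + 1) (by omega) 1 k (by omega) le_rfl
  rw [pow_one, PowerSeries.coeff_mk, Nat.cast_one, one_mul] at hLI
  field_simp [← hLI]
  linear_combination hLI

lemma acoef_nonneg (α : ℕ) (n : ℕ) : 0 ≤ acoef α n := by
  cases n with
  | zero => rw [acoef]
  | succ k =>
    rw [acoef_eq_coeff_div]
    exact div_nonneg (gpoly_pow_coeff_nonneg α (k+1) k) (by positivity)

lemma acoef_le_coeff (α k : ℕ) : acoef α (k + 1) ≤ ((gpoly α) ^ (k + 1)).coeff k := by
  rw [acoef_eq_coeff_div]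
  rw [div_le_iff₀ (by positivity : (0:ℝ) < ((k + 1 : ℕ) : ℝ))]
  refine le_mul_of_one_le_right (gpoly_pow_coeff_nonneg α (k+1) k) (by push_cast; linarith)

lemma rootedTrees_eq_acoef (α k : ℕ) : rootedTrees α (k + 2) = acoef α (k + 1) := by
  rw [acoef_eq_coeff_div, rootedTrees]
  show (1 / (((k + 2 : ℕ) : ℝ) - 1)) *
    ∑ f ∈ (Fintype.piFinset fun _ : Fin (k + 1) => Finset.range α) |>.filter
        (fun f => ∑ i, f i = k),
      ∏ i, (1 : ℝ) / (Nat.factorial (f i)) = _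
  rw [← gpoly_pow_coeff]
  have : (((k + 2 : ℕ) : ℝ) - 1) = ((k + 1 : ℕ) : ℝ) := by push_cast; ring
  rw [this]
  ring
lemma truncExp_zero (α : ℕ) (hα : 1 ≤ α) : truncExp α 0 = 1 := by
  rw [truncExp, Finset.sum_eq_single 0]
  · simp
  · intro γ _ hγ
    rw [zero_pow hγ, zero_div]
  · intro h; exact absurd (Finset.mem_range.mpr (by omega)) h

lemma summable_norm_acoef (α : ℕ) {βc M : ℝ} (hβc : 0 < βc)
    (hM : ∀ n : ℕ, acoef α n * βc ^ n ≤ M) {β : ℝ} (hβ : |β| < βc) :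
    Summable (fun n : ℕ => ‖acoef α n * β ^ n‖) := by
  set r : ℝ := |β| / βc with hr
  have hr0 : 0 ≤ r := div_nonneg (abs_nonneg β) hβc.le
  have hr1 : r < 1 := (div_lt_one hβc).mpr hβ
  refine Summable.of_nonneg_of_le (fun n => norm_nonneg _) (fun n => ?_)
    (((summable_geometric_of_lt_one hr0 hr1).mul_left M))
  have habs : |β| = βc * r := by rw [hr, mul_comm, div_mul_cancel₀ _ hβc.ne']
  calc ‖acoef α n * β ^ n‖ = acoef α n * |β| ^ n := by
        rw [norm_mul, norm_pow, Real.norm_eq_abs, Real.norm_eq_abs,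
          abs_of_nonneg (acoef_nonneg α n)]
    _ = (acoef α n * βc ^ n) * r ^ n := by rw [habs, mul_pow]; ring
    _ ≤ M * r ^ n := mul_le_mul_of_nonneg_right (hM n) (pow_nonneg hr0 n)

lemma pow_tsum_eq (α : ℕ) {β : ℝ}
    (hs : Summable (fun n : ℕ => ‖acoef α n * β ^ n‖)) (γ : ℕ) :
    Summable (fun n : ℕ =>
        ‖PowerSeries.coeff (R := ℝ) n ((PowerSeries.mk (acoef α)) ^ γ) * β ^ n‖) ∧
      (∑' n : ℕ, acoef α n * β ^ n) ^ γ =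
        ∑' n : ℕ, PowerSeries.coeff (R := ℝ) n ((PowerSeries.mk (acoef α)) ^ γ) * β ^ n := by
  have hA : Summable (fun n : ℕ => ‖PowerSeries.coeff (R := ℝ) n (PowerSeries.mk (acoef α)) * β ^ n‖) := by
    refine hs.congr fun n => ?_
    rw [PowerSeries.coeff_mk]
  induction γ with
  | zero =>
    constructor
    · refine summable_of_ne_finset_zero (s := ({0} : Finset ℕ)) fun n hn => ?_
      have : n ≠ 0 := by simpa using hn
      simp [PowerSeries.coeff_one, this]
    · rw [pow_zero, tsum_eq_single 0 (fun n hn => by simp [PowerSeries.coeff_one, hn])]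
      simp
  | succ γ ih =>
    obtain ⟨h1, e1⟩ := ih
    have hkey : ∀ n : ℕ, ∑ kl ∈ Finset.HasAntidiagonal.antidiagonal n,
        (PowerSeries.coeff (R := ℝ) kl.1 ((PowerSeries.mk (acoef α)) ^ γ) * β ^ kl.1) *
          (PowerSeries.coeff (R := ℝ) kl.2 (PowerSeries.mk (acoef α)) * β ^ kl.2) =
        PowerSeries.coeff (R := ℝ) n ((PowerSeries.mk (acoef α)) ^ (γ + 1)) * β ^ n := by
      intro n
      rw [pow_succ, PowerSeries.coeff_mul, Finset.sum_mul]
      refine Finset.sum_congr rfl fun kl hkl => ?_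
      rw [Finset.HasAntidiagonal.mem_antidiagonal] at hkl
      rw [← hkl, pow_add]
      ring
    constructor
    · refine (summable_norm_sum_mul_antidiagonal_of_summable_norm h1 hA).congr fun n => ?_
      rw [hkey n]
    · rw [pow_succ, e1,
        show (∑' n : ℕ, acoef α n * β ^ n) =
          ∑' n : ℕ, PowerSeries.coeff (R := ℝ) n (PowerSeries.mk (acoef α)) * β ^ n from
          tsum_congr fun n => by rw [PowerSeries.coeff_mk],
        tsum_mul_tsum_eq_tsum_sum_antidiagonal_of_summable_norm h1 hA]
      exact tsum_congr hkey

lemma coeff_aeval_gpoly (α : ℕ) (hα : 1 ≤ α) (n : ℕ) :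
    PowerSeries.coeff (R := ℝ) n (Polynomial.aeval (PowerSeries.mk (acoef α)) (gpoly α)) =
      ∑ γ ∈ Finset.range α, ((Nat.factorial γ : ℝ))⁻¹ *
        PowerSeries.coeff (R := ℝ) n ((PowerSeries.mk (acoef α)) ^ γ) := by
  rw [Polynomial.aeval_eq_sum_range' (gpoly_natDegree_lt α hα), map_sum]
  refine Finset.sum_congr rfl fun γ hγ => ?_
  rw [LinearMap.map_smul, smul_eq_mul, gpoly_coeff, if_pos (Finset.mem_range.mp hγ)]
lemma polymer_eq_tsum (α : ℕ) {β : ℝ}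
    (hs : Summable (fun n : ℕ => ‖acoef α n * β ^ n‖)) :
    polymerPartition α β = ∑' n : ℕ, acoef α n * β ^ n := by
  rw [polymerPartition, Summable.tsum_eq_zero_add hs.of_norm]
  have h0 : acoef α 0 * β ^ 0 = 0 := by rw [acoef]; ring
  rw [h0, zero_add]
  exact tsum_congr fun k => by rw [rootedTrees_eq_acoef]

lemma polymer_functional (α : ℕ) (hα : 1 ≤ α) {β : ℝ}
    (hs : Summable (fun n : ℕ => ‖acoef α n * β ^ n‖)) :
    polymerPartition α β = β * truncExp α (polymerPartition α β) := by
  rw [polymer_eq_tsum α hs]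
  set A := PowerSeries.mk (acoef α) with hA
  set S := ∑' n : ℕ, acoef α n * β ^ n with hS
  have htr : truncExp α S = ∑' n : ℕ,
      PowerSeries.coeff (R := ℝ) n (Polynomial.aeval A (gpoly α)) * β ^ n := by
    rw [truncExp]
    have h1 : ∀ γ ∈ Finset.range α, S ^ γ / (Nat.factorial γ : ℝ) =
        ∑' n : ℕ, (PowerSeries.coeff (R := ℝ) n (A ^ γ) * β ^ n) * ((Nat.factorial γ : ℝ))⁻¹ := by
      intro γ _
      rw [(pow_tsum_eq α hs γ).2, div_eq_mul_inv, ← tsum_mul_right]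
    rw [Finset.sum_congr rfl h1, ← Summable.tsum_finsetSum (fun γ _ =>
      ((pow_tsum_eq α hs γ).1.of_norm.mul_right _))]
    refine tsum_congr fun n => ?_
    rw [coeff_aeval_gpoly α hα n, Finset.sum_mul]
    exact Finset.sum_congr rfl fun γ _ => by ring
  rw [htr, ← tsum_mul_left]
  have h2 : ∀ n : ℕ, β * (PowerSeries.coeff (R := ℝ) n (Polynomial.aeval A (gpoly α)) * β ^ n) =
      acoef α (n + 1) * β ^ (n + 1) := by
    intro n
    rw [← acoef_succ_eq, pow_succ]
    ring
  rw [tsum_congr h2, hS, Summable.tsum_eq_zero_add hs.of_norm]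
  have h0 : acoef α 0 * β ^ 0 = 0 := by rw [acoef]; ring
  rw [h0, zero_add]

/-- **Square-root singularity of the branched-polymer partition function.**
Let `α ≥ 3`, `R_c` the unique positive solution of
`(R − 1)·g_α(R) = R^α/(α−1)!`, and `β_c = R_c/g_α(R_c)`.  Then
`R(β) = Σ_{n≥2} r_α(n)·β^{n−1}` is continuous on `[0, β_c)`, extends
continuously to `β_c` with value `R_c`, and there is a constant `C > 0` with
`(R_c − R(β))/√(β_c − β) → C` as `β → β_c⁻`; i.e.
`R(β) ≈ R_c − C·(β_c − β)^{1/2}` near the critical point. -/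
theorem branched_polymer_sqrt_singularity (α : ℕ) (hα : 3 ≤ α)
    (Rc : ℝ) (hRc : 0 < Rc)
    (heq : (Rc - 1) * truncExp α Rc = Rc ^ α / (Nat.factorial (α - 1)))
    (huniq : ∀ R : ℝ, 0 < R →
        (R - 1) * truncExp α R = R ^ α / (Nat.factorial (α - 1)) → R = Rc) :
    ContinuousOn (polymerPartition α) (Set.Ico 0 (Rc / truncExp α Rc)) ∧
    Tendsto (polymerPartition α)
      (nhdsWithin (Rc / truncExp α Rc) (Set.Iio (Rc / truncExp α Rc)))
      (nhds Rc) ∧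
    ∃ C : ℝ, 0 < C ∧
      Tendsto (fun β => (Rc - polymerPartition α β)
          / Real.sqrt (Rc / truncExp α Rc - β))
        (nhdsWithin (Rc / truncExp α Rc) (Set.Iio (Rc / truncExp α Rc)))
        (nhds C) := by
  obtain ⟨b, rfl⟩ : ∃ b, α = b + 3 := ⟨α - 3, by omega⟩
  rw [show b + 3 - 1 = b + 2 from rfl] at heq huniq
  have hg_cont : Continuous (truncExp (b + 3)) := continuous_truncExp (b + 3)
  have hgpos : ∀ x : ℝ, 0 ≤ x → 0 < truncExp (b + 3) x :=
    fun x hx => truncExp_pos (b + 3) (by omega) hx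
  have hgcpos : 0 < truncExp (b + 3) Rc := hgpos Rc hRc.le
  set βc := Rc / truncExp (b + 3) Rc with hβc
  have hβcpos : 0 < βc := div_pos hRc hgcpos
  have hfun_eq : ∀ R : ℝ, truncExp (b + 3) R - R * truncExp (b + 2) R
      = (1 - R) * truncExp (b + 3) R + R ^ (b + 3) / (Nat.factorial (b + 2) : ℝ) := by
    intro R
    have h : truncExp (b + 3) R = truncExp (b + 2) R + R ^ (b + 2) / (Nat.factorial (b + 2) : ℝ) :=
      truncExp_succ (b + 2) R
    rw [h]; ring
  have hfun_Rc : truncExp (b + 3) Rc - Rc * truncExp (b + 2) Rc = 0 := by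
    rw [hfun_eq]; linarith [heq]
  have hfun_pos : ∀ R : ℝ, 0 ≤ R → R < Rc →
      0 < truncExp (b + 3) R - R * truncExp (b + 2) R := by
    intro R hR0 hRRc
    by_contra hle
    push_neg at hle
    have hcont : Continuous fun x : ℝ => truncExp (b + 3) x - x * truncExp (b + 2) x :=
      (continuous_truncExp _).sub (continuous_id.mul (continuous_truncExp _))
    have h0 : truncExp (b + 3) 0 - 0 * truncExp (b + 2) 0 = 1 := by
      rw [truncExp_zero (b + 3) (by omega)]; ring
    have hmem0 : (0 : ℝ) ∈ Set.Icc (truncExp (b + 3) R - R * truncExp (b + 2) R)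
        (truncExp (b + 3) 0 - 0 * truncExp (b + 2) 0) := ⟨hle, by rw [h0]; exact zero_le_one⟩
    obtain ⟨R₁, hR₁mem, hR₁⟩ := intermediate_value_Icc' hR0 hcont.continuousOn hmem0
    have hR₁' : truncExp (b + 3) R₁ - R₁ * truncExp (b + 2) R₁ = 0 := hR₁
    have hR₁pos : 0 < R₁ := by
      rcases eq_or_lt_of_le hR₁mem.1 with h | h
      · exfalso; rw [← h] at hR₁'; linarith [h0, hR₁']
      · exact h
    have hEq : (R₁ - 1) * truncExp (b + 3) R₁ = R₁ ^ (b + 3) / (Nat.factorial (b + 2) : ℝ) := by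
      have h5 := hfun_eq R₁
      rw [hR₁'] at h5
      linarith
    have := huniq R₁ hR₁pos hEq
    linarith [hR₁mem.2]
  have hψcont : ContinuousOn (fun R : ℝ => R / truncExp (b + 3) R) (Set.Icc 0 Rc) :=
    ContinuousOn.div continuous_id.continuousOn hg_cont.continuousOn
      (fun x hx => (hgpos x hx.1).ne')
  have hψmono : StrictMonoOn (fun R : ℝ => R / truncExp (b + 3) R) (Set.Icc 0 Rc) := by
    refine strictMonoOn_of_deriv_pos (convex_Icc 0 Rc) hψcont ?_
    intro x hx
    rw [interior_Icc] at hx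
    have hgd : HasDerivAt (truncExp (b + 3)) (truncExp (b + 2) x) x := by
      have h := hasDerivAt_truncExp (b + 3) x
      rwa [show b + 3 - 1 = b + 2 from rfl] at h
    have hD : HasDerivAt (fun R : ℝ => R / truncExp (b + 3) R)
        ((1 * truncExp (b + 3) x - x * truncExp (b + 2) x) / (truncExp (b + 3) x) ^ 2) x :=
      (hasDerivAt_id x).div hgd (hgpos x hx.1.le).ne'
    rw [hD.deriv, one_mul]
    exact div_pos (hfun_pos x hx.1.le hx.2) (pow_pos (hgpos x hx.1.le) 2)
  have hM : ∀ n : ℕ, acoef (b + 3) n * βc ^ n ≤ Rc := by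
    intro n
    cases n with
    | zero =>
      have h : acoef (b + 3) 0 = 0 := by rw [acoef]
      rw [h, zero_mul]; exact hRc.le
    | succ k =>
      have h1 : acoef (b + 3) (k + 1) ≤ ((gpoly (b + 3)) ^ (k + 1)).coeff k := acoef_le_coeff _ _
      have h2 : ((gpoly (b + 3)) ^ (k + 1)).coeff k * Rc ^ k ≤ (truncExp (b + 3) Rc) ^ (k + 1) := by
        have h3 := coeff_mul_pow_le_eval ((gpoly (b + 3)) ^ (k + 1))
          (fun i => gpoly_pow_coeff_nonneg _ _ _) hRc.le k
        rwa [Polynomial.eval_pow, gpoly_eval] at h3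
      have hβc_eq : βc ^ (k + 1) = Rc ^ (k + 1) / (truncExp (b + 3) Rc) ^ (k + 1) := by
        rw [hβc, div_pow]
      calc acoef (b + 3) (k + 1) * βc ^ (k + 1)
          ≤ ((gpoly (b + 3)) ^ (k + 1)).coeff k * βc ^ (k + 1) :=
            mul_le_mul_of_nonneg_right h1 (pow_nonneg hβcpos.le _)
        _ = (((gpoly (b + 3)) ^ (k + 1)).coeff k * Rc ^ k) *
              (Rc / (truncExp (b + 3) Rc) ^ (k + 1)) := by
            rw [hβc_eq]; ring
        _ ≤ (truncExp (b + 3) Rc) ^ (k + 1) * (Rc / (truncExp (b + 3) Rc) ^ (k + 1)) :=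
            mul_le_mul_of_nonneg_right h2 (by positivity)
        _ = Rc := by field_simp
  have hsum : ∀ β : ℝ, |β| < βc → Summable (fun n : ℕ => ‖acoef (b + 3) n * β ^ n‖) :=
    fun β hβ => summable_norm_acoef (b + 3) hβcpos hM hβ
  set f := polymerPartition (b + 3) with hf
  have habs : ∀ β : ℝ, 0 ≤ β → β < βc → |β| < βc := fun β h1 h2 => by rwa [abs_of_nonneg h1]
  have hf_nonneg : ∀ β : ℝ, 0 ≤ β → β < βc → 0 ≤ f β := by
    intro β h1 h2
    rw [hf, polymer_eq_tsum (b + 3) (hsum β (habs β h1 h2))]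
    exact tsum_nonneg fun n => mul_nonneg (acoef_nonneg _ _) (pow_nonneg h1 _)
  have hfe : ∀ β : ℝ, 0 ≤ β → β < βc → f β = β * truncExp (b + 3) (f β) := fun β h1 h2 =>
    polymer_functional (b + 3) (by omega) (hsum β (habs β h1 h2))
  have hψf : ∀ β : ℝ, 0 ≤ β → β < βc → f β / truncExp (b + 3) (f β) = β := by
    intro β h1 h2
    rw [div_eq_iff (hgpos _ (hf_nonneg β h1 h2)).ne']
    exact hfe β h1 h2
  have hcontf : ContinuousOn f (Set.Ico 0 βc) := by
    have hIcc : ∀ r : ℝ, 0 < r → r < βc → ContinuousOn f (Set.Icc (-r) r) := by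
      intro r hr0 hrβc
      have hu : Summable (fun k : ℕ => acoef (b + 3) (k + 1) * r ^ (k + 1)) := by
        have h := (hsum r (by rwa [abs_of_nonneg hr0.le])).of_norm
        exact h.comp_injective (i := fun k => k + 1) (add_left_injective 1)
      have hb : ∀ (k : ℕ) (x : ℝ), x ∈ Set.Icc (-r) r →
          ‖rootedTrees (b + 3) (k + 2) * x ^ (k + 1)‖ ≤ acoef (b + 3) (k + 1) * r ^ (k + 1) := by
        intro k x hx
        rw [rootedTrees_eq_acoef, norm_mul, norm_pow, Real.norm_eq_abs, Real.norm_eq_abs,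
          abs_of_nonneg (acoef_nonneg _ _)]
        refine mul_le_mul_of_nonneg_left ?_ (acoef_nonneg _ _)
        exact pow_le_pow_left₀ (abs_nonneg x) (abs_le.mpr ⟨hx.1, hx.2⟩) _
      have htu := tendstoUniformlyOn_tsum hu hb
      exact htu.continuousOn (Filter.Eventually.frequently <| Filter.Eventually.of_forall fun t =>
        Continuous.continuousOn (continuous_finset_sum _ fun k _ =>
          continuous_const.mul (continuous_pow (k + 1))))
    intro β₀ hβ₀
    obtain ⟨h0β₀, hβ₀βc⟩ := hβ₀
    have h1 : β₀ < (β₀ + βc) / 2 := by linarith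
    have h2 : (β₀ + βc) / 2 < βc := by linarith
    have h3 : 0 < (β₀ + βc) / 2 := by linarith
    exact ((hIcc _ h3 h2).continuousAt (Icc_mem_nhds (by linarith) h1)).continuousWithinAt
  have hfltRc : ∀ β : ℝ, 0 ≤ β → β < βc → f β < Rc := by
    intro β h1 h2
    by_contra hge
    push_neg at hge
    have hf0 : f 0 = 0 := by
      rw [hf, polymer_eq_tsum (b + 3) (hsum 0 (by rwa [abs_zero]))]
      rw [tsum_eq_single 0 (fun n hn => by rw [zero_pow hn, mul_zero])]
      have h : acoef (b + 3) 0 = 0 := by rw [acoef]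
      rw [h, zero_mul]
    have hsub : Set.Icc (0 : ℝ) β ⊆ Set.Ico 0 βc := fun x hx => ⟨hx.1, lt_of_le_of_lt hx.2 h2⟩
    obtain ⟨β₁, hβ₁mem, hβ₁⟩ := intermediate_value_Icc h1 (hcontf.mono hsub)
      (show Rc ∈ Set.Icc (f 0) (f β) from ⟨by rw [hf0]; exact hRc.le, hge⟩)
    have hβ₁lt : β₁ < βc := lt_of_le_of_lt hβ₁mem.2 h2
    have h4 := hψf β₁ hβ₁mem.1 hβ₁lt
    rw [hβ₁] at h4
    rw [← hβc] at h4
    linarith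
  have htendsto : Tendsto f (nhdsWithin βc (Set.Iio βc)) (nhds Rc) := by
    refine tendsto_order.2 ⟨?_, ?_⟩
    · intro l hl
      rcases lt_or_ge l 0 with hl0 | hl0
      · filter_upwards [Ioo_mem_nhdsLT_of_mem
          (show βc ∈ Set.Ioc 0 βc from ⟨hβcpos, le_rfl⟩)] with β hβ
        exact lt_of_lt_of_le hl0 (hf_nonneg β hβ.1.le hβ.2)
      · have hψl : l / truncExp (b + 3) l < βc := by
          have h := hψmono (Set.mem_Icc.mpr ⟨hl0, hl.le⟩)
            (Set.mem_Icc.mpr ⟨hRc.le, le_rfl⟩) hl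
          simpa [← hβc] using h
        filter_upwards [Ioo_mem_nhdsLT_of_mem
          (show βc ∈ Set.Ioc (l / truncExp (b + 3) l) βc from ⟨hψl, le_rfl⟩)] with β hβ
        have hβ0 : 0 ≤ β := le_trans (div_nonneg hl0 (hgpos l hl0).le) hβ.1.le
        by_contra hc
        push_neg at hc
        have h5 : f β / truncExp (b + 3) (f β) ≤ l / truncExp (b + 3) l := by
          rcases eq_or_lt_of_le hc with h | h
          · rw [h]
          · have h6 := hψmono (Set.mem_Icc.mpr ⟨hf_nonneg β hβ0 hβ.2, (hfltRc β hβ0 hβ.2).le⟩)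
              (Set.mem_Icc.mpr ⟨hl0, hl.le⟩) h
            simpa using h6.le
        rw [hψf β hβ0 hβ.2] at h5
        exact absurd hβ.1 (not_lt.mpr h5)
    · intro u hu
      filter_upwards [Ioo_mem_nhdsLT_of_mem
        (show βc ∈ Set.Ioc 0 βc from ⟨hβcpos, le_rfl⟩)] with β hβ
      exact lt_trans (hfltRc β hβ.1.le hβ.2) hu
  -- polynomial factorization around Rc
  set P : Polynomial ℝ := Polynomial.C Rc * gpoly (b + 3) -
      Polynomial.C (truncExp (b + 3) Rc) * Polynomial.X with hP
  have hPeval : ∀ x : ℝ, P.eval x = Rc * truncExp (b + 3) x - truncExp (b + 3) Rc * x := by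
    intro x
    rw [hP]
    simp [gpoly_eval]
  have hProot : P.IsRoot Rc := by
    show P.eval Rc = 0
    rw [hPeval]; ring
  have hPder : Polynomial.derivative P =
      Polynomial.C Rc * gpoly (b + 2) - Polynomial.C (truncExp (b + 3) Rc) := by
    rw [hP, Polynomial.derivative_sub, Polynomial.derivative_C_mul, Polynomial.derivative_C_mul,
      derivative_gpoly, Polynomial.derivative_X, mul_one, show b + 3 - 1 = b + 2 from rfl]
  have hPderRc : (Polynomial.derivative P).eval Rc = 0 := by
    rw [hPder, Polynomial.eval_sub, Polynomial.eval_mul, Polynomial.eval_C, Polynomial.eval_C,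
      gpoly_eval]
    linarith [hfun_Rc]
  obtain ⟨P₁, hP₁⟩ := Polynomial.dvd_iff_isRoot.mpr hProot
  have hP₁Rc : P₁.eval Rc = 0 := by
    have hd := congrArg Polynomial.derivative hP₁
    simp only [Polynomial.derivative_mul, Polynomial.derivative_sub, Polynomial.derivative_X,
      Polynomial.derivative_C, sub_zero, one_mul] at hd
    have h7 := congrArg (Polynomial.eval Rc) hd
    simp only [Polynomial.eval_add, Polynomial.eval_mul, Polynomial.eval_sub, Polynomial.eval_X,
      Polynomial.eval_C, sub_self, zero_mul, add_zero, hPderRc] at h7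
    exact h7.symm
  obtain ⟨Q, hQ⟩ := Polynomial.dvd_iff_isRoot.mpr (show P₁.IsRoot Rc from hP₁Rc)
  have hPQ : P = (Polynomial.X - Polynomial.C Rc) ^ 2 * Q := by rw [hP₁, hQ]; ring
  have h2d : ∀ (q : Polynomial ℝ) (c : ℝ), Polynomial.eval c (Polynomial.derivative
      (Polynomial.derivative ((Polynomial.X - Polynomial.C c) ^ 2 * q))) = 2 * q.eval c := by
    intro q c
    set u : Polynomial ℝ := Polynomial.X - Polynomial.C c with hu_def
    have hsq : (Polynomial.X - Polynomial.C c) ^ 2 * q = u * (u * q) := by rw [hu_def]; ring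
    have hu : Polynomial.derivative u = 1 := by rw [hu_def]; exact Polynomial.derivative_X_sub_C c
    have hu0 : Polynomial.eval c u = 0 := by rw [hu_def]; simp
    have e1 : Polynomial.derivative (u * (u * q)) =
        u * q + u * (q + u * Polynomial.derivative q) := by
      rw [Polynomial.derivative_mul, hu, one_mul, Polynomial.derivative_mul, hu, one_mul]
    have e2 : Polynomial.derivative (u * q + u * (q + u * Polynomial.derivative q)) =
        (q + u * Polynomial.derivative q) +
          ((q + u * Polynomial.derivative q) +
            u * Polynomial.derivative (q + u * Polynomial.derivative q)) := by
      rw [Polynomial.derivative_add, Polynomial.derivative_mul, hu, one_mul,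
        Polynomial.derivative_mul, hu, one_mul]
    rw [hsq, e1, e2]
    simp only [Polynomial.eval_add, Polynomial.eval_mul, hu0, zero_mul, add_zero, mul_zero]
    ring
  have hQRc : Q.eval Rc = Rc * truncExp (b + 1) Rc / 2 := by
    have hdd1 : Polynomial.derivative (Polynomial.derivative P) =
        Polynomial.C Rc * gpoly (b + 1) := by
      rw [hPder, Polynomial.derivative_sub, Polynomial.derivative_C_mul, derivative_gpoly,
        Polynomial.derivative_C, sub_zero, show b + 2 - 1 = b + 1 from rfl]
    have hdd : Polynomial.eval Rc (Polynomial.derivative (Polynomial.derivative P)) =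
        Polynomial.eval Rc (Polynomial.derivative (Polynomial.derivative
          ((Polynomial.X - Polynomial.C Rc) ^ 2 * Q))) := by rw [hPQ]
    rw [hdd1, h2d, Polynomial.eval_mul, Polynomial.eval_C, gpoly_eval] at hdd
    linarith
  have hQpos : 0 < Q.eval Rc := by
    rw [hQRc]
    have h8 := one_le_truncExp (b + 1) (by omega) hRc.le
    nlinarith
  have hkey : ∀ β : ℝ, 0 ≤ β → β < βc →
      βc - β = (Rc - f β) ^ 2 *
        (Q.eval (f β) / (truncExp (b + 3) Rc * truncExp (b + 3) (f β))) := by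
    intro β h1 h2
    have hfb0 : 0 ≤ f β := hf_nonneg β h1 h2
    have hgfb : 0 < truncExp (b + 3) (f β) := hgpos _ hfb0
    have hPfb : P.eval (f β) = (f β - Rc) ^ 2 * Q.eval (f β) := by
      rw [hPQ]
      simp [Polynomial.eval_pow]
    have hPfb2 : Rc * truncExp (b + 3) (f β) - truncExp (b + 3) Rc * f β =
        (f β - Rc) ^ 2 * Q.eval (f β) := by rw [← hPeval, hPfb]
    have h9 : βc - β = (Rc * truncExp (b + 3) (f β) - truncExp (b + 3) Rc * f β) /
        (truncExp (b + 3) Rc * truncExp (b + 3) (f β)) := by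
      rw [eq_div_iff (by positivity)]
      have h3 : f β = β * truncExp (b + 3) (f β) := hfe β h1 h2
      have h4 : βc * truncExp (b + 3) Rc = Rc := by
        rw [hβc]; field_simp
      linear_combination truncExp (b + 3) (f β) * h4 + truncExp (b + 3) Rc * h3
    rw [h9, hPfb2, show (f β - Rc) ^ 2 = (Rc - f β) ^ 2 by ring, mul_div_assoc]
  have htendw : Tendsto (fun β => Q.eval (f β) / (truncExp (b + 3) Rc * truncExp (b + 3) (f β)))
      (nhdsWithin βc (Set.Iio βc))
      (nhds (Q.eval Rc / (truncExp (b + 3) Rc * truncExp (b + 3) Rc))) := by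
    have hc : ContinuousAt (fun R : ℝ => Q.eval R / (truncExp (b + 3) Rc * truncExp (b + 3) R))
        Rc := by
      apply ContinuousAt.div
      · exact Q.continuous.continuousAt
      · exact (continuous_const.mul hg_cont).continuousAt
      · exact (mul_pos hgcpos hgcpos).ne'
    exact hc.tendsto.comp htendsto
  have hwinfpos : 0 < Q.eval Rc / (truncExp (b + 3) Rc * truncExp (b + 3) Rc) :=
    div_pos hQpos (mul_pos hgcpos hgcpos)
  refine ⟨hcontf, htendsto,
    (Real.sqrt (Q.eval Rc / (truncExp (b + 3) Rc * truncExp (b + 3) Rc)))⁻¹,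
    inv_pos.mpr (Real.sqrt_pos.mpr hwinfpos), ?_⟩
  have htends2 : Tendsto (fun β =>
      (Real.sqrt (Q.eval (f β) / (truncExp (b + 3) Rc * truncExp (b + 3) (f β))))⁻¹)
      (nhdsWithin βc (Set.Iio βc))
      (nhds ((Real.sqrt (Q.eval Rc / (truncExp (b + 3) Rc * truncExp (b + 3) Rc)))⁻¹)) :=
    (htendw.sqrt).inv₀ (Real.sqrt_pos.mpr hwinfpos).ne'
  refine Filter.Tendsto.congr' ?_ htends2
  filter_upwards [Ioo_mem_nhdsLT_of_mem
    (show βc ∈ Set.Ioc 0 βc from ⟨hβcpos, le_rfl⟩)] with β hβ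
  have h1 : 0 ≤ β := hβ.1.le
  have h2 : β < βc := hβ.2
  have hfb : f β < Rc := hfltRc β h1 h2
  have hβcβ : 0 < βc - β := by linarith
  have hk := hkey β h1 h2
  have hsq : 0 < (Rc - f β) ^ 2 := pow_pos (by linarith) 2
  have hwpos : 0 < Q.eval (f β) / (truncExp (b + 3) Rc * truncExp (b + 3) (f β)) := by
    nlinarith [hk]
  have hsqrt : Real.sqrt (βc - β) = (Rc - f β) *
      Real.sqrt (Q.eval (f β) / (truncExp (b + 3) Rc * truncExp (b + 3) (f β))) := by
    rw [hk, Real.sqrt_mul (sq_nonneg _), Real.sqrt_sq (by linarith : (0:ℝ) ≤ Rc - f β)]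
  show (Real.sqrt (Q.eval (f β) / (truncExp (b + 3) Rc * truncExp (b + 3) (f β))))⁻¹ =
    (Rc - f β) / Real.sqrt (βc - β)
  rw [hsqrt, div_mul_cancel_left₀ (ne_of_gt (by linarith : (0:ℝ) < Rc - f β))]
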